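/- arXiv:1912.12449 — 2 statements merged into one kernel-verified Lean document; each statement's English description precedes it below -/
import Mathlib

section
/- Let M be a connected matroid of rank at least 3 on a finite set S with rank function r, and let F ≠ L be non-degenerate flats of M such that the set Q := {x ∈ BP_M : x(F) = r(F) and x(L) = r(L)} has dimension |S| − 3 and is not contained in any coordinate hyperplane {x ∈ ℝ^S : x(i) = 0} (i ∈ S). Then exactly one of the following holds: F ∩ L = ∅, F ∪ L = S, F ⊊ L, or L ⊊ F. Moreover, if F ∩ L = ∅ then Q = {x ∈ BP_M : x(F ∪ L) = r(F ∪ L)}, and if F ∪ L = S then Q = {x ∈ BP_M : x(F ∩ L) = r(F ∩ L)}. -/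
open Finset

/-- A (finite) matroid on a finite ground set `E`, given by a submodular rank function,
following the matroid rank axioms (R1)-(R3). -/
structure FinMatroid (α : Type*) [DecidableEq α] where
  E : Finset α
  r : Finset α → ℕ
  r_le_card : ∀ ⦃A : Finset α⦄, A ⊆ E → r A ≤ A.card
  r_mono : ∀ ⦃A B : Finset α⦄, A ⊆ B → B ⊆ E → r A ≤ r B
  r_submod : ∀ ⦃A B : Finset α⦄, A ⊆ E → B ⊆ E → r (A ∪ B) + r (A ∩ B) ≤ r A + r B

namespace FinMatroid

variable {α : Type*} [DecidableEq α]

/-- A set is independent if it is a subset of the ground set whose rank is its cardinality. -/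
def Indep (M : FinMatroid α) (A : Finset α) : Prop :=
  A ⊆ M.E ∧ M.r A = A.card

/-- A base is a maximal independent set. -/
def Base (M : FinMatroid α) (B : Finset α) : Prop :=
  M.Indep B ∧ ∀ ⦃A : Finset α⦄, M.Indep A → B ⊆ A → A = B

/-- A basis of `A` is a maximal independent subset of `A`. -/
def BasisOf (M : FinMatroid α) (I A : Finset α) : Prop :=
  I ⊆ A ∧ M.Indep I ∧ ∀ ⦃J : Finset α⦄, J ⊆ A → M.Indep J → I ⊆ J → J = I

/-- A flat is a set `F` with `F = {s ∈ E : r (F ∪ {s}) = r F}`. -/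
def Flat (M : FinMatroid α) (F : Finset α) : Prop :=
  F = M.E.filter (fun s => M.r (F ∪ {s}) = M.r F)

/-- A matroid is loopless if every singleton of the ground set has rank one. -/
def Loopless (M : FinMatroid α) : Prop :=
  ∀ s ∈ M.E, M.r {s} = 1

/-- The restriction `M|A` of `M` to `A`. -/
def restrict (M : FinMatroid α) (A : Finset α) : FinMatroid α where
  E := A ∩ M.E
  r := M.r
  r_le_card := fun _ h => M.r_le_card (h.trans inter_subset_right)
  r_mono := fun _ _ h h' => M.r_mono h (h'.trans inter_subset_right)
  r_submod := fun _ _ h h' =>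
    M.r_submod (h.trans inter_subset_right) (h'.trans inter_subset_right)

/-- The contraction `M/C` of `C` in `M`, with rank function `A ↦ r (A ∪ C) - r C`. -/
def contract (M : FinMatroid α) (C : Finset α) : FinMatroid α where
  E := M.E \ C
  r := fun A => M.r (A ∪ C ∩ M.E) - M.r (C ∩ M.E)
  r_le_card := by
    intro A hA
    have hAE : A ⊆ M.E := hA.trans sdiff_subset
    have hc : C ∩ M.E ⊆ M.E := inter_subset_right
    have h1 := M.r_submod hAE hc
    have h2 := M.r_le_card hAE
    beta_reduce
    omega
  r_mono := by
    intro A B hAB hB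
    have hBE : B ⊆ M.E := hB.trans sdiff_subset
    have hc : C ∩ M.E ⊆ M.E := inter_subset_right
    have h1 : M.r (A ∪ C ∩ M.E) ≤ M.r (B ∪ C ∩ M.E) :=
      M.r_mono (union_subset_union hAB (Finset.Subset.refl _)) (union_subset hBE hc)
    beta_reduce
    omega
  r_submod := by
    intro A B hA hB
    have hAE : A ⊆ M.E := hA.trans sdiff_subset
    have hBE : B ⊆ M.E := hB.trans sdiff_subset
    have hc : C ∩ M.E ⊆ M.E := inter_subset_right
    have hAc : A ∪ C ∩ M.E ⊆ M.E := union_subset hAE hc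
    have hBc : B ∪ C ∩ M.E ⊆ M.E := union_subset hBE hc
    have h1 := M.r_submod hAc hBc
    have e1 : (A ∪ C ∩ M.E) ∪ (B ∪ C ∩ M.E) = (A ∪ B) ∪ C ∩ M.E := by
      ext x; simp only [Finset.mem_union, Finset.mem_inter]; tauto
    have e2 : (A ∪ C ∩ M.E) ∩ (B ∪ C ∩ M.E) = (A ∩ B) ∪ C ∩ M.E := by
      ext x; simp only [Finset.mem_union, Finset.mem_inter]; tauto
    rw [e1, e2] at h1
    have hABc : (A ∩ B) ∪ C ∩ M.E ⊆ M.E := union_subset (inter_subset_left.trans hAE) hc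
    have hABc' : (A ∪ B) ∪ C ∩ M.E ⊆ M.E := union_subset (union_subset hAE hBE) hc
    have h2 : M.r (C ∩ M.E) ≤ M.r ((A ∩ B) ∪ C ∩ M.E) := M.r_mono subset_union_right hABc
    have h3 : M.r (C ∩ M.E) ≤ M.r (A ∪ C ∩ M.E) := M.r_mono subset_union_right hAc
    have h4 : M.r (C ∩ M.E) ≤ M.r (B ∪ C ∩ M.E) := M.r_mono subset_union_right hBc
    have h5 : M.r (C ∩ M.E) ≤ M.r ((A ∪ B) ∪ C ∩ M.E) := M.r_mono subset_union_right hABc'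
    beta_reduce
    omega

/-- `A` is a separator of `M` if `r A + r (E \ A) = r E`. -/
def Separator (M : FinMatroid α) (A : Finset α) : Prop :=
  A ⊆ M.E ∧ M.r A + M.r (M.E \ A) = M.r M.E

/-- `M` is connected (inseparable) if its ground set is nonempty and its only
separators are `∅` and `E`. -/
def Connected (M : FinMatroid α) : Prop :=
  M.E.Nonempty ∧ ∀ A : Finset α, M.Separator A → A = ∅ ∨ A = M.E

/-- For connected `M`, a set `∅ ≠ F ⊊ E` is non-degenerate if both `M|F` and `M/F`
are connected. -/
def Nondegenerate (M : FinMatroid α) (F : Finset α) : Prop :=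
  F ≠ ∅ ∧ F ⊂ M.E ∧ (M.restrict F).Connected ∧ (M.contract F).Connected

end FinMatroid

noncomputable section

open FinMatroid

/-- The indicator (incidence) vector `1^A ∈ ℝ^α` of a finite set `A`. -/
def indicatorVec {α : Type*} [DecidableEq α] (A : Finset α) : α → ℝ :=
  fun i => if i ∈ A then 1 else 0

/-- The base polytope of a matroid: the convex hull of the indicator vectors of its bases. -/
def basePolytope {α : Type*} [DecidableEq α] (M : FinMatroid α) : Set (α → ℝ) :=
  convexHull ℝ {x | ∃ B : Finset α, M.Base B ∧ x = indicatorVec B}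

/-- `Q` is a face of `P`: either `∅`, or `P` itself, or the subset of `P` where some
linear functional attains its maximum over `P` (an exposed face). -/
def IsFaceOf {α : Type*} (P Q : Set (α → ℝ)) : Prop :=
  Q = ∅ ∨ Q = P ∨ ∃ ℓ : (α → ℝ) →ₗ[ℝ] ℝ, Q = {x ∈ P | ∀ y ∈ P, ℓ y ≤ ℓ x}

/-- The dimension of a convex set: the dimension of the direction of its affine span. -/
def sdim {α : Type*} (Q : Set (α → ℝ)) : ℕ :=
  Module.finrank ℝ (affineSpan ℝ Q).direction

end

/-- The face `P(F) = {x ∈ BP_M : x(F) = r F}` of the base polytope. -/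
noncomputable def facePF {α : Type*} [DecidableEq α] (M : FinMatroid α) (F : Finset α) :
    Set (α → ℝ) :=
  {x ∈ basePolytope M | ∑ i ∈ F, x i = (M.r F : ℝ)}

/-- `Q = {x ∈ BP_M : x(F) = r F and x(L) = r L}`. -/
noncomputable def ridgeQ {α : Type*} [DecidableEq α] (M : FinMatroid α) (F L : Finset α) :
    Set (α → ℝ) :=
  {x ∈ basePolytope M | (∑ i ∈ F, x i = (M.r F : ℝ)) ∧ (∑ i ∈ L, x i = (M.r L : ℝ))}

/-!
For `x ∈ Q` we have `x(F) + x(L) = x(F ∪ L) + x(F ∩ L) ≤ r(F ∪ L) + r(F ∩ L) ≤ r(F) + r(L) = x(F) + x(L)`,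
so `(F, L)` is a modular pair and, on `BP_M`, tightness (`x(A) = r(A)`) of `F` and `L` is
equivalent to tightness of `F ∪ L` and `F ∩ L`. Tightness of `∅` and of `S` is automatic, which
gives the two descriptions of `Q`.
A disjoint modular pair covering `S` would make `F` a separator of the connected matroid `M`.
If `F` and `L` cross, the functionals `x(F)`, `x(L)`, `x(F ∩ L)`, `x(S)` are linearly independent
and constant on `Q`, so `dim Q ≤ |S| - 4`.
-/

namespace FinMatroid

variable {α : Type*} [DecidableEq α] (M : FinMatroid α)

lemma r_empty : M.r ∅ = 0 :=
  Nat.le_zero.mp (M.r_le_card (empty_subset _))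

lemma r_union_singleton_le {X : Finset α} {s : α} (hX : X ⊆ M.E) (hs : s ∈ M.E) :
    M.r (X ∪ {s}) ≤ M.r X + 1 := by
  have hsE : {s} ⊆ M.E := singleton_subset_iff.mpr hs
  have hsub := M.r_submod hX hsE
  have hs1 : M.r {s} ≤ 1 := (M.r_le_card hsE).trans_eq (card_singleton s)
  omega

lemma r_union_eq_of_forall_singleton {X Y : Finset α} (hX : X ⊆ M.E) (hY : Y ⊆ M.E)
    (h : ∀ s ∈ Y, M.r (X ∪ {s}) = M.r X) : M.r (X ∪ Y) = M.r X := by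
  induction Y using Finset.induction_on with
  | empty => rw [union_empty]
  | @insert a Y _ ih =>
    have hYE : Y ⊆ M.E := (subset_insert a Y).trans hY
    have hXY : X ∪ Y ⊆ M.E := union_subset hX hYE
    have hXa : X ∪ {a} ⊆ M.E :=
      union_subset hX (singleton_subset_iff.mpr (hY (mem_insert_self a Y)))
    have hsub := M.r_submod hXY hXa
    have hU : X ∪ Y ∪ (X ∪ {a}) = X ∪ insert a Y := by
      ext; simp only [mem_union, mem_insert, mem_singleton]; tauto
    rw [hU] at hsub
    have hinter : M.r X ≤ M.r ((X ∪ Y) ∩ (X ∪ {a})) :=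
      M.r_mono (subset_inter subset_union_left subset_union_left) (inter_subset_left.trans hXY)
    have hunion : M.r X ≤ M.r (X ∪ insert a Y) := M.r_mono subset_union_left (union_subset hX hY)
    have hrY := ih hYE fun s hs => h s (mem_insert_of_mem hs)
    have hra := h a (mem_insert_self a Y)
    omega

variable {M}

lemma Indep.subset {A B : Finset α} (hB : M.Indep B) (hAB : A ⊆ B) : M.Indep A := by
  obtain ⟨hBE, hBr⟩ := hB
  have hAE : A ⊆ M.E := hAB.trans hBE
  have hBA : B \ A ⊆ M.E := sdiff_subset.trans hBE
  have hsub := M.r_submod hAE hBA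
  rw [union_sdiff_of_subset hAB, inter_sdiff_self, M.r_empty] at hsub
  have hA := M.r_le_card hAE
  have hBA' := M.r_le_card hBA
  have hcard := card_sdiff_add_card_eq_card hAB
  exact ⟨hAE, by omega⟩

lemma Base.r_union_singleton {B : Finset α} (hB : M.Base B) {s : α} (hs : s ∈ M.E) :
    M.r (B ∪ {s}) = M.r B := by
  obtain ⟨⟨hBE, hBr⟩, hmax⟩ := hB
  by_cases hsB : s ∈ B
  · rw [union_eq_left.mpr (singleton_subset_iff.mpr hsB)]
  have hBs : B ∪ {s} ⊆ M.E := union_subset hBE (singleton_subset_iff.mpr hs)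
  have hmono : M.r B ≤ M.r (B ∪ {s}) := M.r_mono subset_union_left hBs
  have hle := M.r_union_singleton_le hBE hs
  have hcard : (B ∪ {s}).card = B.card + 1 := by
    rw [union_comm, ← insert_eq, card_insert_of_notMem hsB]
  have hne : M.r (B ∪ {s}) ≠ M.r B + 1 := fun heq =>
    hsB <| hmax ⟨hBs, by omega⟩ subset_union_left ▸ mem_union_right B (mem_singleton_self s)
  omega

lemma Base.r_ground {B : Finset α} (hB : M.Base B) : M.r M.E = B.card := by
  have h := M.r_union_eq_of_forall_singleton hB.1.1 subset_rfl fun _ hs => hB.r_union_singleton hs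
  rw [union_eq_right.mpr hB.1.1] at h
  rw [h, hB.1.2]

lemma Connected.union_ne_ground_of_disjoint {F L : Finset α} (hM : M.Connected) (hF : F ≠ ∅)
    (hFE : F ⊂ M.E) (hFL : F ∩ L = ∅) (hmod : M.r F + M.r L = M.r (F ∪ L) + M.r (F ∩ L)) :
    F ∪ L ≠ M.E := by
  intro hU
  have hL : M.E \ F = L := hU ▸ union_sdiff_cancel_left (disjoint_iff_inter_eq_empty.mpr hFL)
  rw [hFL, M.r_empty, hU, ← hL] at hmod
  exact (hM.2 F ⟨hFE.subset, by omega⟩).elim hF hFE.ne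

end FinMatroid

lemma Finset.exactly_one_of_not_crossing {α : Type*} [DecidableEq α] {E F L : Finset α} (hne : F ≠ L)
    (hF : F ≠ ∅) (hL : L ≠ ∅) (hFE : F ⊂ E) (hLE : L ⊂ E) (hpart : ¬ (F ∩ L = ∅ ∧ F ∪ L = E))
    (hnoncross : F ∩ L = ∅ ∨ F ∪ L = E ∨ F ⊆ L ∨ L ⊆ F) :
    (F ∩ L = ∅ ∧ F ∪ L ≠ E ∧ ¬ F ⊂ L ∧ ¬ L ⊂ F) ∨
    (F ∩ L ≠ ∅ ∧ F ∪ L = E ∧ ¬ F ⊂ L ∧ ¬ L ⊂ F) ∨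
    (F ∩ L ≠ ∅ ∧ F ∪ L ≠ E ∧ F ⊂ L ∧ ¬ L ⊂ F) ∨
    (F ∩ L ≠ ∅ ∧ F ∪ L ≠ E ∧ ¬ F ⊂ L ∧ L ⊂ F) := by
  have hFL : F ⊆ L → F ∩ L ≠ ∅ ∧ F ∪ L ≠ E := fun h => by
    rw [inter_eq_left.mpr h, union_eq_right.mpr h]; exact ⟨hF, hLE.ne⟩
  have hLF : L ⊆ F → F ∩ L ≠ ∅ ∧ F ∪ L ≠ E := fun h => by
    rw [inter_eq_right.mpr h, union_eq_left.mpr h]; exact ⟨hL, hFE.ne⟩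
  rcases hnoncross with hI | hU | h | h
  · exact Or.inl ⟨hI, fun hU => hpart ⟨hI, hU⟩, fun h => (hFL h.subset).1 hI,
      fun h => (hLF h.subset).1 hI⟩
  · exact Or.inr <| Or.inl ⟨fun hI => hpart ⟨hI, hU⟩, hU, fun h => (hFL h.subset).2 hU,
      fun h => (hLF h.subset).2 hU⟩
  · exact Or.inr <| Or.inr <| Or.inl ⟨(hFL h).1, (hFL h).2, ssubset_of_subset_of_ne h hne,
      fun h' => h'.2 h⟩
  · exact Or.inr <| Or.inr <| Or.inr ⟨(hLF h).1, (hLF h).2, fun h' => h'.2 h,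
      ssubset_of_subset_of_ne h hne.symm⟩

section BasePolytope

variable {α : Type*}

noncomputable def sumLin (A : Finset α) : (α → ℝ) →ₗ[ℝ] ℝ where
  toFun x := ∑ i ∈ A, x i
  map_add' _ _ := sum_add_distrib
  map_smul' _ _ := by simp [mul_sum]

@[simp] lemma sumLin_apply (A : Finset α) (x : α → ℝ) : sumLin A x = ∑ i ∈ A, x i := rfl

variable [DecidableEq α]

lemma sumLin_single (A : Finset α) (e : α) (v : ℝ) :
    sumLin A (Pi.single e v) = if e ∈ A then v else 0 := by
  simp [Pi.single_apply]

lemma sumLin_prod_surjective {E F L : Finset α} {a b c d : α} (ha : a ∈ F \ L) (hb : b ∈ L \ F)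
    (hc : c ∈ F ∩ L) (hd : d ∈ E \ (F ∪ L)) (hFE : F ⊆ E) (hLE : L ⊆ E) :
    Function.Surjective
      ((sumLin F).prod ((sumLin L).prod ((sumLin (F ∩ L)).prod (sumLin E)))) := by
  simp only [mem_sdiff, mem_inter, mem_union, not_or] at ha hb hc hd
  rintro ⟨w₁, w₂, w₃, w₄⟩
  refine ⟨Pi.single a (w₁ - w₃) + Pi.single b (w₂ - w₃) + Pi.single c w₃ +
    Pi.single d (w₄ - w₁ - w₂ + w₃), ?_⟩
  simp [-sumLin_apply, sumLin_single, ha, hb, hc, hd, hFE ha.1, hLE hb.1, hFE hc.1]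
  ring

lemma sum_indicatorVec (A B : Finset α) : ∑ i ∈ A, indicatorVec B i = ((A ∩ B).card : ℝ) := by
  simp [indicatorVec]

variable {M : FinMatroid α} {x : α → ℝ}

lemma sum_le_r_of_mem_basePolytope (hx : x ∈ basePolytope M) {A : Finset α} (hA : A ⊆ M.E) :
    ∑ i ∈ A, x i ≤ M.r A := by
  refine convexHull_min ?_ (convex_halfSpace_le (sumLin A).isLinear (M.r A : ℝ)) hx
  rintro _ ⟨B, hB, rfl⟩
  have hAB : M.r (A ∩ B) ≤ M.r A := M.r_mono inter_subset_left hA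
  rw [(hB.1.subset inter_subset_right).2] at hAB
  show ∑ i ∈ A, indicatorVec B i ≤ M.r A
  rw [sum_indicatorVec]
  exact_mod_cast hAB

lemma sum_ground_eq_r_of_mem_basePolytope (hx : x ∈ basePolytope M) :
    ∑ i ∈ M.E, x i = M.r M.E := by
  refine convexHull_min ?_ (convex_hyperplane (sumLin M.E).isLinear (M.r M.E : ℝ)) hx
  rintro _ ⟨B, hB, rfl⟩
  show ∑ i ∈ M.E, indicatorVec B i = M.r M.E
  rw [sum_indicatorVec, inter_eq_right.mpr hB.1.1, hB.r_ground]

end BasePolytope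

section Ridge

variable {α : Type*} [DecidableEq α] {M : FinMatroid α} {F L : Finset α} {x : α → ℝ}

lemma tight_union_inter_of_mem_ridgeQ (hF : F ⊆ M.E) (hL : L ⊆ M.E) (hx : x ∈ ridgeQ M F L) :
    ∑ i ∈ F ∪ L, x i = M.r (F ∪ L) ∧ ∑ i ∈ F ∩ L, x i = M.r (F ∩ L) := by
  obtain ⟨hxP, hxF, hxL⟩ := hx
  have hU := sum_le_r_of_mem_basePolytope hxP (union_subset hF hL)
  have hI := sum_le_r_of_mem_basePolytope hxP ((inter_subset_left : F ∩ L ⊆ F).trans hF)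
  have hsum : ∑ i ∈ F ∪ L, x i + ∑ i ∈ F ∩ L, x i = ∑ i ∈ F, x i + ∑ i ∈ L, x i :=
    sum_union_inter
  have hsub : (M.r (F ∪ L) : ℝ) + M.r (F ∩ L) ≤ M.r F + M.r L := by
    exact_mod_cast M.r_submod hF hL
  constructor <;> linarith

lemma modular_of_mem_ridgeQ (hF : F ⊆ M.E) (hL : L ⊆ M.E) (hx : x ∈ ridgeQ M F L) :
    M.r F + M.r L = M.r (F ∪ L) + M.r (F ∩ L) := by
  obtain ⟨hU, hI⟩ := tight_union_inter_of_mem_ridgeQ hF hL hx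
  have hsum : ∑ i ∈ F ∪ L, x i + ∑ i ∈ F ∩ L, x i = ∑ i ∈ F, x i + ∑ i ∈ L, x i :=
    sum_union_inter
  rw [hU, hI, hx.2.1, hx.2.2] at hsum
  exact_mod_cast hsum.symm

lemma ridgeQ_eq_of_modular (hF : F ⊆ M.E) (hL : L ⊆ M.E)
    (hmod : M.r F + M.r L = M.r (F ∪ L) + M.r (F ∩ L)) :
    ridgeQ M F L = {x ∈ basePolytope M |
      ∑ i ∈ F ∪ L, x i = M.r (F ∪ L) ∧ ∑ i ∈ F ∩ L, x i = M.r (F ∩ L)} := by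
  ext x
  refine ⟨fun hx => ⟨hx.1, tight_union_inter_of_mem_ridgeQ hF hL hx⟩, ?_⟩
  rintro ⟨hxP, hxU, hxI⟩
  have hxF := sum_le_r_of_mem_basePolytope hxP hF
  have hxL := sum_le_r_of_mem_basePolytope hxP hL
  have hsum : ∑ i ∈ F ∪ L, x i + ∑ i ∈ F ∩ L, x i = ∑ i ∈ F, x i + ∑ i ∈ L, x i :=
    sum_union_inter
  have hmodR : (M.r F : ℝ) + M.r L = M.r (F ∪ L) + M.r (F ∩ L) := by exact_mod_cast hmod
  exact ⟨hxP, by linarith, by linarith⟩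

lemma ridgeQ_eq_facePF_union (hF : F ⊆ M.E) (hL : L ⊆ M.E)
    (hmod : M.r F + M.r L = M.r (F ∪ L) + M.r (F ∩ L)) (hFL : F ∩ L = ∅) :
    ridgeQ M F L = facePF M (F ∪ L) := by
  rw [ridgeQ_eq_of_modular hF hL hmod, facePF, hFL, M.r_empty]
  simp

lemma ridgeQ_eq_facePF_inter (hF : F ⊆ M.E) (hL : L ⊆ M.E)
    (hmod : M.r F + M.r L = M.r (F ∪ L) + M.r (F ∩ L)) (hFL : F ∪ L = M.E) :
    ridgeQ M F L = facePF M (F ∩ L) := by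
  rw [ridgeQ_eq_of_modular hF hL hmod, facePF, hFL]
  ext x
  exact and_congr_right fun hxP => and_iff_right (sum_ground_eq_r_of_mem_basePolytope hxP)

end Ridge

section Dimension

variable {α : Type*} [Fintype α]

lemma sdim_le_finrank_ker {V : Type*} [AddCommGroup V] [Module ℝ V] {Q : Set (α → ℝ)}
    (T : (α → ℝ) →ₗ[ℝ] V) (hT : ∀ x ∈ Q, ∀ y ∈ Q, T x = T y) :
    sdim Q ≤ Module.finrank ℝ (LinearMap.ker T) := by
  refine Submodule.finrank_mono ?_
  rw [direction_affineSpan, vectorSpan_def, Submodule.span_le]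
  rintro _ ⟨x, hx, y, hy, rfl⟩
  simp [vsub_eq_sub, hT x hx y hy]

variable [DecidableEq α]

lemma sdim_ridgeQ_add_four_le {M : FinMatroid α} {F L : Finset α} (hF : F ⊆ M.E) (hL : L ⊆ M.E)
    (hI : (F ∩ L).Nonempty) (hU : F ∪ L ≠ M.E) (hFL : ¬ F ⊆ L) (hLF : ¬ L ⊆ F) :
    sdim (ridgeQ M F L) + 4 ≤ Fintype.card α := by
  obtain ⟨a, ha⟩ := not_subset.mp hFL
  obtain ⟨b, hb⟩ := not_subset.mp hLF
  obtain ⟨c, hc⟩ := hI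
  obtain ⟨d, hd⟩ := sdiff_nonempty.mpr fun h => hU (subset_antisymm (union_subset hF hL) h)
  set T := (sumLin F).prod ((sumLin L).prod ((sumLin (F ∩ L)).prod (sumLin M.E)))
  have hker : Module.finrank ℝ (LinearMap.ker T) + 4 = Fintype.card α := by
    have h := T.finrank_range_add_finrank_ker
    rw [LinearMap.range_eq_top.mpr (sumLin_prod_surjective (mem_sdiff.mpr ha)
      (mem_sdiff.mpr hb) hc hd hF hL), finrank_top] at h
    simp only [Module.finrank_fintype_fun_eq_card, Module.finrank_prod, Module.finrank_self] at h
    omega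
  have hT : ∀ x ∈ ridgeQ M F L,
      T x = ((M.r F : ℝ), (M.r L : ℝ), (M.r (F ∩ L) : ℝ), (M.r M.E : ℝ)) := fun x hx => by
    simp [T, hx.2.1, hx.2.2, (tight_union_inter_of_mem_ridgeQ hF hL hx).2,
      sum_ground_eq_r_of_mem_basePolytope hx.1]
  have := sdim_le_finrank_ker T fun x hx y hy => (hT x hx).trans (hT y hy).symm
  omega

end Dimension

theorem statement11_general {α : Type*} [DecidableEq α] [Fintype α] (M : FinMatroid α)
    (hconn : M.Connected)
    (F L : Finset α) (hne : F ≠ L)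
    (hFnd : M.Nondegenerate F)
    (hLnd : M.Nondegenerate L)
    (hdim : sdim (ridgeQ M F L) = Fintype.card α - 3)
    (hcoord : ∀ i : α, ¬ ridgeQ M F L ⊆ {x | x i = 0}) :
    ((F ∩ L = ∅ ∧ F ∪ L ≠ M.E ∧ ¬ F ⊂ L ∧ ¬ L ⊂ F) ∨
     (F ∩ L ≠ ∅ ∧ F ∪ L = M.E ∧ ¬ F ⊂ L ∧ ¬ L ⊂ F) ∨
     (F ∩ L ≠ ∅ ∧ F ∪ L ≠ M.E ∧ F ⊂ L ∧ ¬ L ⊂ F) ∨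
     (F ∩ L ≠ ∅ ∧ F ∪ L ≠ M.E ∧ ¬ F ⊂ L ∧ L ⊂ F)) ∧
    (F ∩ L = ∅ → ridgeQ M F L = facePF M (F ∪ L)) ∧
    (F ∪ L = M.E → ridgeQ M F L = facePF M (F ∩ L)) := by
  obtain ⟨hF, hFE, -⟩ := hFnd
  obtain ⟨hL, hLE, -⟩ := hLnd
  obtain ⟨x, hx⟩ : (ridgeQ M F L).Nonempty := by
    obtain ⟨e, -⟩ := hconn.1
    exact Set.nonempty_iff_ne_empty.mpr fun h => hcoord e (h ▸ Set.empty_subset _)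
  have hmod := modular_of_mem_ridgeQ hFE.subset hLE.subset hx
  have hnoncross : F ∩ L = ∅ ∨ F ∪ L = M.E ∨ F ⊆ L ∨ L ⊆ F := by
    by_contra! ⟨hI, hU, hFL, hLF⟩
    have := sdim_ridgeQ_add_four_le hFE.subset hLE.subset hI hU hFL hLF
    omega
  have hpart : ¬ (F ∩ L = ∅ ∧ F ∪ L = M.E) := fun ⟨hI, hU⟩ =>
    hconn.union_ne_ground_of_disjoint hF hFE hI hmod hU
  exact ⟨exactly_one_of_not_crossing hne hF hL hFE hLE hpart hnoncross,
    ridgeQ_eq_facePF_union hFE.subset hLE.subset hmod,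
    ridgeQ_eq_facePF_inter hFE.subset hLE.subset hmod⟩

/-- For distinct non-degenerate flats `F, L` of a connected matroid of
rank `≥ 3` such that `Q = {x ∈ BP_M : x(F) = r F, x(L) = r L}` has dimension `|S| - 3` and
lies in no coordinate hyperplane, exactly one of `F ∩ L = ∅`, `F ∪ L = S`, `F ⊊ L`,
`L ⊊ F` holds; moreover in the first case `Q = {x ∈ BP_M : x(F ∪ L) = r (F ∪ L)}` and in
the second case `Q = {x ∈ BP_M : x(F ∩ L) = r (F ∩ L)}`. -/
theorem statement11 {α : Type*} [DecidableEq α] [Fintype α] (M : FinMatroid α)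
    (hE : M.E = Finset.univ) (hconn : M.Connected) (hrank : 3 ≤ M.r M.E)
    (F L : Finset α) (hne : F ≠ L)
    (hF : M.Flat F) (hFnd : M.Nondegenerate F)
    (hL : M.Flat L) (hLnd : M.Nondegenerate L)
    (hdim : sdim (ridgeQ M F L) = Fintype.card α - 3)
    (hcoord : ∀ i : α, ¬ ridgeQ M F L ⊆ {x | x i = 0}) :
    ((F ∩ L = ∅ ∧ F ∪ L ≠ M.E ∧ ¬ F ⊂ L ∧ ¬ L ⊂ F) ∨
     (F ∩ L ≠ ∅ ∧ F ∪ L = M.E ∧ ¬ F ⊂ L ∧ ¬ L ⊂ F) ∨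
     (F ∩ L ≠ ∅ ∧ F ∪ L ≠ M.E ∧ F ⊂ L ∧ ¬ L ⊂ F) ∨
     (F ∩ L ≠ ∅ ∧ F ∪ L ≠ M.E ∧ ¬ F ⊂ L ∧ L ⊂ F)) ∧
    (F ∩ L = ∅ → ridgeQ M F L = facePF M (F ∪ L)) ∧
    (F ∪ L = M.E → ridgeQ M F L = facePF M (F ∩ L)) :=
  statement11_general M hconn F L hne hFnd hLnd hdim hcoord
end

section
/- Let M be a connected matroid of rank 3 on a finite set S. Then M has two distinct proper flats F, L ⊊ S with F ∩ L ≠ ∅ and F ∪ L = S if and only if M has a rank-1 flat T such that the contraction M/T is disconnected. Moreover, when they exist, such a pair {F, L} and such a flat T are unique, T = F ∩ L, the flats F and L have rank 2, and F and L are non-degenerate. -/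
open Finset

/-!
Contracting a set `T` disconnects `M` exactly when `E` is covered by two sets `X, Y ⊋ T` with
`X ∩ Y = T` and `r X + r Y = r E + r T`. For a point `T` in rank 3 this forces `r X = r Y = 2`,
and then `X` and `Y` are flats: this is the correspondence between splitting pairs and
disconnecting points. A rank-2 flat through the common point of a splitting pair `{F, L}` is
`F` or `L` by submodularity, and the partner of `F` is the closure of `E \ F`, which has rank 2
because `M` is connected; this gives both uniqueness statements. Finally `M / F` is connected
because `F` is a hyperplane.
-/

namespace FinMatroid

variable {α : Type*} [DecidableEq α] {M : FinMatroid α} {A F G L L' T X Y : Finset α} {s : α}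

theorem r_empty_s13 (M : FinMatroid α) : M.r ∅ = 0 :=
  Nat.le_zero.mp (by simpa using M.r_le_card (empty_subset M.E))

theorem r_le_r_ground (hA : A ⊆ M.E) : M.r A ≤ M.r M.E :=
  M.r_mono hA Subset.rfl

theorem r_ground_le_r_add_r_sdiff (hA : A ⊆ M.E) : M.r M.E ≤ M.r A + M.r (M.E \ A) := by
  have := M.r_submod hA (sdiff_subset : M.E \ A ⊆ M.E)
  rwa [union_sdiff_of_subset hA, inter_sdiff_self, r_empty_s13, add_zero] at this

theorem Flat.subset_ground (hF : M.Flat F) : F ⊆ M.E := by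
  rw [hF]
  exact filter_subset _ _

theorem flat_of_forall_r_union_singleton (hF : F ⊆ M.E)
    (h : ∀ s ∈ M.E, M.r (F ∪ {s}) ≤ M.r F → s ∈ F) : M.Flat F := by
  ext s
  simp only [mem_filter]
  exact ⟨fun hs => ⟨hF hs, by rw [union_eq_left.mpr (singleton_subset_iff.mpr hs)]⟩,
    fun hs => h s hs.1 hs.2.le⟩

theorem Flat.mem_of_r_union_singleton_le (hF : M.Flat F) (hXF : X ⊆ F) (hs : s ∈ M.E)
    (h : M.r (X ∪ {s}) ≤ M.r X) : s ∈ F := by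
  have hFE := hF.subset_ground
  have hsE : {s} ⊆ M.E := singleton_subset_iff.mpr hs
  have hsub := M.r_submod hFE (union_subset (hXF.trans hFE) hsE)
  rw [← union_assoc, union_eq_left.mpr hXF] at hsub
  have hX : M.r X ≤ M.r (F ∩ (X ∪ {s})) :=
    M.r_mono (subset_inter hXF subset_union_left) (inter_subset_left.trans hFE)
  have hFs : M.r F ≤ M.r (F ∪ {s}) := M.r_mono subset_union_left (union_subset hFE hsE)
  rw [hF, mem_filter]
  exact ⟨hs, by omega⟩

theorem Flat.subset_of_r_le (hG : M.Flat G) (hXG : X ⊆ G) (hXY : X ⊆ Y) (hY : Y ⊆ M.E)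
    (hr : M.r Y ≤ M.r X) : Y ⊆ G := fun _ ha =>
  hG.mem_of_r_union_singleton_le hXG (hY ha)
    ((M.r_mono (union_subset hXY (singleton_subset_iff.mpr ha)) hY).trans hr)

theorem Flat.eq_of_r_le (hF : M.Flat F) (hG : M.Flat G) (hXF : X ⊆ F) (hXG : X ⊆ G)
    (hrF : M.r F ≤ M.r X) (hrG : M.r G ≤ M.r X) : F = G :=
  (hG.subset_of_r_le hXG hXF hF.subset_ground hrF).antisymm
    (hF.subset_of_r_le hXF hXG hG.subset_ground hrG)

theorem Flat.r_lt_of_ssubset (hF : M.Flat F) (hFX : F ⊂ X) (hX : X ⊆ M.E) :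
    M.r F < M.r X := by
  by_contra! h
  exact hFX.ne (hFX.subset.antisymm (hF.subset_of_r_le Subset.rfl hFX.subset hX h))

theorem Flat.r_lt_r_ground (hF : M.Flat F) (hFE : F ≠ M.E) : M.r F < M.r M.E :=
  hF.r_lt_of_ssubset (Finset.ssubset_iff_subset_ne.mpr ⟨hF.subset_ground, hFE⟩) Subset.rfl

theorem Flat.inter (hF : M.Flat F) (hG : M.Flat G) : M.Flat (F ∩ G) :=
  flat_of_forall_r_union_singleton (inter_subset_left.trans hF.subset_ground) fun _ hs h =>
    mem_inter.mpr ⟨hF.mem_of_r_union_singleton_le inter_subset_left hs h,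
      hG.mem_of_r_union_singleton_le inter_subset_right hs h⟩

/-- An element `s ∉ X` lies in `Y` and raises the rank of the flat `X ∩ Y`, hence, by
submodularity, that of `X`. -/
theorem Flat.left_of_r_add_r_le (hI : M.Flat (X ∩ Y)) (hXY : X ∪ Y = M.E)
    (hr : M.r X + M.r Y ≤ M.r M.E + M.r (X ∩ Y)) : M.Flat X := by
  have hXE : X ⊆ M.E := hXY ▸ subset_union_left
  have hYE : Y ⊆ M.E := hXY ▸ subset_union_right
  refine flat_of_forall_r_union_singleton hXE fun s hs h => ?_
  by_contra hsX
  have hsY : s ∈ Y := by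
    rw [← hXY, mem_union] at hs
    exact hs.resolve_left hsX
  have hgrow : ¬ M.r (X ∩ Y ∪ {s}) ≤ M.r (X ∩ Y) := fun h' =>
    hsX (mem_inter.mp (hI.mem_of_r_union_singleton_le Subset.rfl hs h')).1
  have hsub := M.r_submod (union_subset hXE (singleton_subset_iff.mpr hs)) hYE
  rw [union_right_comm, hXY, union_eq_left.mpr (singleton_subset_iff.mpr hs),
    union_inter_distrib_right, inter_eq_left.mpr (singleton_subset_iff.mpr hsY)] at hsub
  omega

theorem Connected.r_lt_r_add_r_sdiff (hconn : M.Connected) (hA : A ⊆ M.E) (hne : A.Nonempty)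
    (hAE : A ≠ M.E) : M.r M.E < M.r A + M.r (M.E \ A) := by
  refine (r_ground_le_r_add_r_sdiff hA).lt_of_ne fun h => ?_
  rcases hconn.2 A ⟨hA, h.symm⟩ with h' | h'
  exacts [hne.ne_empty h', hAE h']

theorem Connected.r_singleton (hconn : M.Connected) (hE : M.r M.E ≠ 0) (hs : s ∈ M.E) :
    M.r {s} = 1 := by
  have hsE : {s} ⊆ M.E := singleton_subset_iff.mpr hs
  have hle : M.r {s} ≤ 1 := by simpa using M.r_le_card hsE
  by_cases hsE' : {s} = M.E
  · rw [hsE'] at hle ⊢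
    omega
  · have := hconn.r_lt_r_add_r_sdiff hsE (singleton_nonempty s) hsE'
    have := r_le_r_ground (M := M) (sdiff_subset : M.E \ {s} ⊆ M.E)
    omega

theorem Connected.one_le_r (hconn : M.Connected) (hE : M.r M.E ≠ 0) (hA : A ⊆ M.E)
    (hne : A.Nonempty) : 1 ≤ M.r A := by
  obtain ⟨a, ha⟩ := hne
  rw [← hconn.r_singleton hE (hA ha)]
  exact M.r_mono (singleton_subset_iff.mpr ha) hA

theorem contract_r (hT : T ⊆ M.E) (A : Finset α) :
    (M.contract T).r A = M.r (A ∪ T) - M.r T := by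
  simp only [contract, inter_eq_left.mpr hT]

theorem contract_separator_iff (hT : T ⊆ M.E) (hA : A ⊆ M.E \ T) :
    (M.contract T).Separator A ↔
      M.r (A ∪ T) + M.r ((M.E \ T) \ A ∪ T) = M.r M.E + M.r T := by
  have := M.r_mono subset_union_right (union_subset (hA.trans sdiff_subset) hT)
  have := M.r_mono (subset_union_right (s₁ := (M.E \ T) \ A))
    (union_subset (sdiff_subset.trans sdiff_subset) hT)
  have := M.r_mono hT Subset.rfl
  change A ⊆ M.E \ T ∧ (M.contract T).r A + (M.contract T).r ((M.E \ T) \ A) =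
    (M.contract T).r (M.E \ T) ↔ _
  rw [contract_r hT, contract_r hT, contract_r hT, sdiff_union_of_subset hT]
  simp only [hA, true_and]
  omega

/-- A separator `A` of `M / T` corresponds to `X = A ∪ T` and `Y = (E \ T \ A) ∪ T`. -/
theorem not_connected_contract_iff (hT : T ⊆ M.E) (hTE : T ≠ M.E) :
    ¬ (M.contract T).Connected ↔ ∃ X Y, X ∪ Y = M.E ∧ X ∩ Y = T ∧ T ⊂ X ∧ T ⊂ Y ∧
      M.r X + M.r Y = M.r M.E + M.r T := by
  have hground : (M.contract T).E = M.E \ T := rfl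
  constructor
  · intro h
    have hne : (M.contract T).E.Nonempty := sdiff_nonempty.mpr fun h' => hTE (hT.antisymm h')
    obtain ⟨A, hsep, hA0, hAE⟩ : ∃ A, (M.contract T).Separator A ∧ A ≠ ∅ ∧
        A ≠ (M.contract T).E := by
      simpa [Connected, hne, not_or] using h
    have hA : A ⊆ M.E \ T := hsep.1
    rw [hground] at hAE
    have hssubset : ∀ {Z}, Z ⊆ M.E \ T → Z ≠ ∅ → T ⊂ Z ∪ T := fun hZ hZ0 => by
      obtain ⟨z, hz⟩ := nonempty_iff_ne_empty.mpr hZ0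
      exact ssubset_of_subset_of_ne subset_union_right fun h' =>
        (mem_sdiff.mp (hZ hz)).2 (h' ▸ mem_union_left _ hz)
    refine ⟨A ∪ T, (M.E \ T) \ A ∪ T, ?_, ?_, hssubset hA hA0, hssubset sdiff_subset ?_,
      (contract_separator_iff hT hA).mp hsep⟩
    · rw [union_union_union_comm, union_sdiff_of_subset hA, union_self,
        sdiff_union_of_subset hT]
    · ext x
      have := @hA x
      simp only [mem_union, mem_sdiff, mem_inter] at *
      tauto
    · rw [Ne, sdiff_eq_empty_iff_subset]
      exact fun h' => hAE (hA.antisymm h')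
  · rintro ⟨X, Y, hXY, hI, hTX, hTY, hr⟩ ⟨-, hconn⟩
    have hYE : Y ⊆ M.E := hXY ▸ subset_union_right
    have hA : X \ T ⊆ M.E \ T := sdiff_subset_sdiff (hXY ▸ subset_union_left) Subset.rfl
    have hcompl : (M.E \ T) \ (X \ T) = Y \ T := by
      rw [← hXY, ← hI]
      ext x
      simp only [mem_union, mem_sdiff, mem_inter]
      tauto
    have hsep : (M.contract T).Separator (X \ T) := (contract_separator_iff hT hA).mpr (by
      rwa [hcompl, sdiff_union_of_subset hTX.subset, sdiff_union_of_subset hTY.subset])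
    rcases hconn _ hsep with h | h
    · exact hTX.ne (hTX.subset.antisymm (sdiff_eq_empty_iff_subset.mp h))
    · obtain ⟨y, hyY, hyT⟩ := exists_of_ssubset hTY
      have hyX : y ∈ X \ T := h ▸ mem_sdiff.mpr ⟨hYE hyY, hyT⟩
      exact hyT (hI ▸ mem_inter.mpr ⟨(mem_sdiff.mp hyX).1, hyY⟩)

theorem Flat.connected_contract_of_r_add_one (hF : M.Flat F) (hFE : F ≠ M.E)
    (hr : M.r F + 1 = M.r M.E) : (M.contract F).Connected := by
  by_contra h
  obtain ⟨X, Y, hXY, -, hFX, hFY, hr'⟩ := (not_connected_contract_iff hF.subset_ground hFE).mp h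
  have := hF.r_lt_of_ssubset hFX (hXY ▸ subset_union_left)
  have := hF.r_lt_of_ssubset hFY (hXY ▸ subset_union_right)
  omega

def IsSplittingPair (M : FinMatroid α) (F L : Finset α) : Prop :=
  M.Flat F ∧ M.Flat L ∧ F ≠ L ∧ F ≠ M.E ∧ L ≠ M.E ∧ F ∩ L ≠ ∅ ∧ F ∪ L = M.E

def IsDisconnectingPoint (M : FinMatroid α) (T : Finset α) : Prop :=
  M.Flat T ∧ M.r T = 1 ∧ ¬ (M.contract T).Connected

theorem IsSplittingPair.symm (h : M.IsSplittingPair F L) : M.IsSplittingPair L F := by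
  obtain ⟨hF, hL, hFL, hFE, hLE, hne, hcov⟩ := h
  exact ⟨hL, hF, hFL.symm, hLE, hFE, inter_comm F L ▸ hne, union_comm F L ▸ hcov⟩

theorem IsSplittingPair.r_eq (h : M.IsSplittingPair F L) (hconn : M.Connected)
    (hrank : M.r M.E = 3) : M.r F = 2 ∧ M.r L = 2 ∧ M.r (F ∩ L) = 1 := by
  obtain ⟨hF, hL, -, hFE, hLE, hne, hcov⟩ := h
  have := hF.r_lt_r_ground hFE
  have := hL.r_lt_r_ground hLE
  have hsub := M.r_submod hF.subset_ground hL.subset_ground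
  have := hconn.one_le_r (by omega) (inter_subset_left.trans hF.subset_ground)
    (nonempty_iff_ne_empty.mpr hne)
  rw [hcov] at hsub
  omega

theorem IsSplittingPair.isDisconnectingPoint_inter (h : M.IsSplittingPair F L)
    (hconn : M.Connected) (hrank : M.r M.E = 3) : M.IsDisconnectingPoint (F ∩ L) := by
  obtain ⟨hrF, hrL, hrT⟩ := h.r_eq hconn hrank
  obtain ⟨hF, hL, -, hFE, hLE, -, hcov⟩ := h
  have hTE : F ∩ L ≠ M.E := fun h' => by rw [h'] at hrT; omega
  refine ⟨hF.inter hL, hrT, (not_connected_contract_iff (inter_subset_left.trans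
    hF.subset_ground) hTE).mpr ⟨F, L, hcov, rfl, ?_, ?_, by omega⟩⟩
  · refine ssubset_of_subset_of_ne inter_subset_left fun h' => hLE ?_
    rw [← hcov, union_eq_right.mpr (inter_eq_left.mp h')]
  · refine ssubset_of_subset_of_ne inter_subset_right fun h' => hFE ?_
    rw [← hcov, union_eq_left.mpr (inter_eq_right.mp h')]

theorem IsDisconnectingPoint.exists_isSplittingPair (h : M.IsDisconnectingPoint T)
    (hrank : M.r M.E = 3) : ∃ F L, M.IsSplittingPair F L ∧ F ∩ L = T := by
  obtain ⟨hT, hrT, hdis⟩ := h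
  have hTE : T ≠ M.E := fun h' => by rw [h'] at hrT; omega
  obtain ⟨X, Y, hXY, hI, hTX, hTY, hr⟩ :=
    (not_connected_contract_iff hT.subset_ground hTE).mp hdis
  have := hT.r_lt_of_ssubset hTX (hXY ▸ subset_union_left)
  have := hT.r_lt_of_ssubset hTY (hXY ▸ subset_union_right)
  rw [hrank, hrT] at hr
  have hrX : M.r X = 2 := by omega
  have hrY : M.r Y = 2 := by omega
  have hI' : M.Flat (X ∩ Y) := hI ▸ hT
  refine ⟨X, Y, ⟨hI'.left_of_r_add_r_le hXY (by rw [hI]; omega),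
    (inter_comm X Y ▸ hI').left_of_r_add_r_le (union_comm X Y ▸ hXY)
      (by rw [inter_comm, hI]; omega), ?_, ?_, ?_, ?_, hXY⟩, hI⟩
  · rintro rfl
    rw [inter_self] at hI
    exact hTX.ne hI.symm
  · rintro rfl
    omega
  · rintro rfl
    omega
  · rw [hI]
    rintro rfl
    rw [r_empty_s13] at hrT
    omega

theorem IsSplittingPair.eq_or_eq_of_inter_subset (h : M.IsSplittingPair F L)
    (hconn : M.Connected) (hrank : M.r M.E = 3) (hG : M.Flat G) (hrG : M.r G = 2)
    (hsub : F ∩ L ⊆ G) : G = F ∨ G = L := by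
  obtain ⟨hrF, hrL, hrT⟩ := h.r_eq hconn hrank
  obtain ⟨hF, hL, -, -, -, -, hcov⟩ := h
  have hGE := hG.subset_ground
  have hsubmod := M.r_submod (inter_subset_left.trans hGE : G ∩ F ⊆ M.E)
    (inter_subset_left.trans hGE : G ∩ L ⊆ M.E)
  rw [← inter_union_distrib_left, hcov, inter_eq_left.mpr hGE, ← inter_inter_distrib_left,
    inter_eq_right.mpr hsub] at hsubmod
  have := M.r_mono (inter_subset_right : G ∩ F ⊆ F) hF.subset_ground
  have := M.r_mono (inter_subset_right : G ∩ L ⊆ L) hL.subset_ground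
  by_cases hGF : M.r (G ∩ F) = 2
  · exact Or.inl (hG.eq_of_r_le hF inter_subset_left inter_subset_right (by omega) (by omega))
  · exact Or.inr (hG.eq_of_r_le hL inter_subset_left inter_subset_right (by omega) (by omega))

theorem IsSplittingPair.right_unique (h : M.IsSplittingPair F L)
    (h' : M.IsSplittingPair F L') (hconn : M.Connected) (hrank : M.r M.E = 3) : L = L' := by
  obtain ⟨hrF, hrL, -⟩ := h.r_eq hconn hrank
  obtain ⟨-, hrL', -⟩ := h'.r_eq hconn hrank
  obtain ⟨hF, hL, -, hFE, -, -, hcov⟩ := h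
  obtain ⟨-, hL', -, -, -, -, hcov'⟩ := h'
  have hFne : F.Nonempty := nonempty_iff_ne_empty.mpr fun h0 => by
    rw [h0, r_empty_s13] at hrF
    omega
  have hsep := hconn.r_lt_r_add_r_sdiff hF.subset_ground hFne hFE
  have hcompl : M.E \ F ⊆ L ∩ L' :=
    subset_inter (sdiff_le_iff.mpr hcov.ge) (sdiff_le_iff.mpr hcov'.ge)
  have := M.r_mono hcompl (inter_subset_left.trans hL.subset_ground)
  exact hL.eq_of_r_le hL' inter_subset_left inter_subset_right (by omega) (by omega)

theorem IsSplittingPair.subset_or_subset (h : M.IsSplittingPair F L) (hconn : M.Connected)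
    (hrank : M.r M.E = 3) (hT : M.Flat T) (hrT : M.r T = 1) : T ⊆ F ∨ T ⊆ L := by
  obtain ⟨hF, hL, -, -, -, -, hcov⟩ := h
  obtain ⟨t, ht⟩ := nonempty_iff_ne_empty.mpr fun h0 : T = ∅ => by
    rw [h0, r_empty_s13] at hrT
    omega
  have htE := hT.subset_ground ht
  have hrt := hconn.r_singleton (by omega) htE
  have htT : {t} ⊆ T := singleton_subset_iff.mpr ht
  rcases mem_union.mp (hcov ▸ htE) with htF | htL
  · exact Or.inl (hF.subset_of_r_le (singleton_subset_iff.mpr htF) htT hT.subset_ground (by omega))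
  · exact Or.inr (hL.subset_of_r_le (singleton_subset_iff.mpr htL) htT hT.subset_ground (by omega))

theorem IsSplittingPair.unique {F' : Finset α} (h : M.IsSplittingPair F L)
    (h' : M.IsSplittingPair F' L') (hconn : M.Connected) (hrank : M.r M.E = 3) :
    (F = F' ∧ L = L') ∨ (F = L' ∧ L = F') := by
  wlog hsub : F' ∩ L' ⊆ F generalizing F L
  · have hT' := h'.isDisconnectingPoint_inter hconn hrank
    have hsubL := (h.subset_or_subset hconn hrank hT'.1 hT'.2.1).resolve_left hsub
    rcases this h.symm hsubL with ⟨h1, h2⟩ | ⟨h1, h2⟩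
    exacts [Or.inr ⟨h2, h1⟩, Or.inl ⟨h2, h1⟩]
  rcases h'.eq_or_eq_of_inter_subset hconn hrank h.1 (h.r_eq hconn hrank).1 hsub with rfl | rfl
  · exact Or.inl ⟨rfl, h.right_unique h' hconn hrank⟩
  · exact Or.inr ⟨rfl, h.right_unique h'.symm hconn hrank⟩

theorem IsDisconnectingPoint.unique {T' : Finset α} (hT : M.IsDisconnectingPoint T)
    (hT' : M.IsDisconnectingPoint T') (hconn : M.Connected) (hrank : M.r M.E = 3) :
    T = T' := by
  obtain ⟨F, L, h, rfl⟩ := hT.exists_isSplittingPair hrank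
  obtain ⟨F', L', h', rfl⟩ := hT'.exists_isSplittingPair hrank
  rcases h.unique h' hconn hrank with ⟨rfl, rfl⟩ | ⟨rfl, rfl⟩
  · rfl
  · exact inter_comm _ _

theorem IsSplittingPair.connected_restrict_left (h : M.IsSplittingPair F L)
    (hconn : M.Connected) (hrank : M.r M.E = 3) : (M.restrict F).Connected := by
  obtain ⟨hrF, hrL, hrT⟩ := h.r_eq hconn hrank
  obtain ⟨hF, hL, -, -, -, hne, hcov⟩ := h
  have hFE := hF.subset_ground
  have hE3 : M.r M.E ≠ 0 := by omega
  -- A rank-1 part `X` of `F` meeting `L` lies in the point `F ∩ L`, so `F \ X` would be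
  -- separated from `L ⊇ E \ (F \ X)`.
  have key : ∀ X ⊆ F, M.r X = 1 → (X ∩ L).Nonempty → M.r (F \ X) ≠ 1 := by
    intro X hXF hrX hXL hrFX
    have hXT : X ⊆ F ∩ L := (hF.inter hL).subset_of_r_le (inter_subset_inter hXF Subset.rfl)
      inter_subset_left (hXF.trans hFE)
      (hrX ▸ hconn.one_le_r hE3 (inter_subset_left.trans (hXF.trans hFE)) hXL)
    have hcompl : M.E \ (F \ X) ⊆ L := fun x hx => by
      obtain ⟨hxE, hxFX⟩ := mem_sdiff.mp hx
      by_cases hxF : x ∈ F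
      · exact (mem_inter.mp (hXT (by simpa [hxF] using hxFX))).2
      · exact (mem_union.mp (hcov ▸ hxE)).resolve_left hxF
    have hFXne : (F \ X).Nonempty := nonempty_iff_ne_empty.mpr fun h0 => by
      rw [h0, r_empty_s13] at hrFX
      omega
    have hFXE : F \ X ≠ M.E := fun h' => by
      rw [h', hrank] at hrFX
      omega
    have := hconn.r_lt_r_add_r_sdiff (sdiff_subset.trans hFE) hFXne hFXE
    have := M.r_mono hcompl hL.subset_ground
    omega
  have hE : (M.restrict F).E = F := inter_eq_left.mpr hFE
  obtain ⟨t, ht⟩ := nonempty_iff_ne_empty.mpr hne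
  refine ⟨⟨t, hE.symm ▸ mem_of_mem_inter_left ht⟩, fun A ⟨hA, hsep⟩ => ?_⟩
  rw [hE] at hA hsep ⊢
  change M.r A + M.r (F \ A) = M.r F at hsep
  by_contra! hA'
  have := hconn.one_le_r hE3 (hA.trans hFE) hA'.1
  have := hconn.one_le_r hE3 (sdiff_subset.trans hFE)
    (sdiff_nonempty.mpr fun h' => hA'.2 (hA.antisymm h'))
  by_cases htA : t ∈ A
  · exact key A hA (by omega) ⟨t, mem_inter.mpr ⟨htA, mem_of_mem_inter_right ht⟩⟩
      (by omega)
  · refine key (F \ A) sdiff_subset (by omega)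
      ⟨t, mem_inter.mpr ⟨mem_sdiff.mpr ⟨mem_of_mem_inter_left ht, htA⟩,
        mem_of_mem_inter_right ht⟩⟩ ?_
    rw [Finset.sdiff_sdiff_eq_self hA]
    omega

theorem IsSplittingPair.nondegenerate_left (h : M.IsSplittingPair F L) (hconn : M.Connected)
    (hrank : M.r M.E = 3) : M.Nondegenerate F := by
  obtain ⟨hrF, -, -⟩ := h.r_eq hconn hrank
  have hrestrict := h.connected_restrict_left hconn hrank
  obtain ⟨hF, -, -, hFE, -, -, -⟩ := h
  refine ⟨?_, Finset.ssubset_iff_subset_ne.mpr ⟨hF.subset_ground, hFE⟩, hrestrict,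
    hF.connected_contract_of_r_add_one hFE (by omega)⟩
  rintro rfl
  rw [r_empty_s13] at hrF
  omega

end FinMatroid

/-- A connected rank-3 matroid has two distinct proper flats `F, L` with
`F ∩ L ≠ ∅` and `F ∪ L = S` iff it has a rank-1 flat `T` with `M/T` disconnected; these
flats are unique, `T = F ∩ L`, `F` and `L` have rank 2, and `F, L` are non-degenerate. -/
theorem statement13 {α : Type*} [DecidableEq α] (M : FinMatroid α)
    (hconn : M.Connected) (hrank : M.r M.E = 3) :
    ((∃ F L : Finset α, M.Flat F ∧ M.Flat L ∧ F ≠ L ∧ F ≠ M.E ∧ L ≠ M.E ∧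
        F ∩ L ≠ ∅ ∧ F ∪ L = M.E) ↔
      (∃ T : Finset α, M.Flat T ∧ M.r T = 1 ∧ ¬ (M.contract T).Connected)) ∧
    (∀ F L F' L' : Finset α,
      (M.Flat F ∧ M.Flat L ∧ F ≠ L ∧ F ≠ M.E ∧ L ≠ M.E ∧ F ∩ L ≠ ∅ ∧ F ∪ L = M.E) →
      (M.Flat F' ∧ M.Flat L' ∧ F' ≠ L' ∧ F' ≠ M.E ∧ L' ≠ M.E ∧ F' ∩ L' ≠ ∅ ∧
        F' ∪ L' = M.E) →
      ((F = F' ∧ L = L') ∨ (F = L' ∧ L = F'))) ∧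
    (∀ T T' : Finset α,
      (M.Flat T ∧ M.r T = 1 ∧ ¬ (M.contract T).Connected) →
      (M.Flat T' ∧ M.r T' = 1 ∧ ¬ (M.contract T').Connected) → T = T') ∧
    (∀ F L T : Finset α,
      (M.Flat F ∧ M.Flat L ∧ F ≠ L ∧ F ≠ M.E ∧ L ≠ M.E ∧ F ∩ L ≠ ∅ ∧ F ∪ L = M.E) →
      (M.Flat T ∧ M.r T = 1 ∧ ¬ (M.contract T).Connected) →
      T = F ∩ L ∧ M.r F = 2 ∧ M.r L = 2 ∧ M.Nondegenerate F ∧ M.Nondegenerate L) := by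
  refine ⟨⟨?_, ?_⟩, ?_, ?_, ?_⟩
  · rintro ⟨F, L, h⟩
    exact ⟨F ∩ L, FinMatroid.IsSplittingPair.isDisconnectingPoint_inter h hconn hrank⟩
  · rintro ⟨T, hT⟩
    obtain ⟨F, L, h, -⟩ := FinMatroid.IsDisconnectingPoint.exists_isSplittingPair hT hrank
    exact ⟨F, L, h⟩
  · exact fun F L F' L' h h' => FinMatroid.IsSplittingPair.unique h h' hconn hrank
  · exact fun T T' hT hT' => FinMatroid.IsDisconnectingPoint.unique hT hT' hconn hrank
  · rintro F L T (h : M.IsSplittingPair F L) (hT : M.IsDisconnectingPoint T)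
    obtain ⟨hrF, hrL, -⟩ := h.r_eq hconn hrank
    exact ⟨hT.unique (h.isDisconnectingPoint_inter hconn hrank) hconn hrank, hrF, hrL,
      h.nondegenerate_left hconn hrank, h.symm.nondegenerate_left hconn hrank⟩
end
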